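/- Let G be a maximal 3-γc-vertex critical graph on n vertices with α(G) + ω(G) = n − 1. Then there exist a maximum independent set I and a maximum clique W of G with I ∩ W = ∅. -/

import Mathlib

open Finset

variable {V : Type*}

/-- `D` is a connected dominating set of `G`: every vertex is in `D` or adjacent to a
vertex of `D`, and the subgraph induced by `D` is connected. -/
def IsConnDomSet (G : SimpleGraph V) (D : Set V) : Prop :=
  (∀ v : V, v ∈ D ∨ ∃ u ∈ D, G.Adj u v) ∧ (G.induce D).Connected

/-- The connected domination number `γc(G)`. -/
noncomputable def gammaC (G : SimpleGraph V) [Fintype V] : ℕ :=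
  sInf {k | ∃ D : Finset V, D.card = k ∧ IsConnDomSet G ↑D}

/-- The independence number `α(G)`. -/
noncomputable def alpha (G : SimpleGraph V) [Fintype V] : ℕ :=
  sSup {k | ∃ I : Finset V, I.card = k ∧ (↑I : Set V).Pairwise fun u v => ¬ G.Adj u v}

/-- The clique number `ω(G)`. -/
noncomputable def omegaNum (G : SimpleGraph V) [Fintype V] : ℕ :=
  sSup {k | ∃ W : Finset V, W.card = k ∧ (↑W : Set V).Pairwise G.Adj}

/-- The minimum degree `δ(G)`. -/
noncomputable def minDeg (G : SimpleGraph V) [Fintype V] : ℕ :=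
  sInf {k | ∃ v : V, (G.neighborSet v).ncard = k}

/-- The vertex connectivity `κ(G)`: the minimum size of a set of vertices whose
deletion leaves a graph that is disconnected or has at most one vertex
(so `κ = n - 1` for the complete graph on `n` vertices). -/
noncomputable def kappa (G : SimpleGraph V) [Fintype V] : ℕ :=
  sInf {k | ∃ S : Finset V, S.card = k ∧
    (¬ (G.induce (↑S : Set V)ᶜ).Connected ∨ ((↑S : Set V)ᶜ).Subsingleton)}

/-- `G` is `3`-`γc`-edge critical: `γc(G) = 3` and adding any missing edge decreases `γc`. -/
def EdgeCritical3 (G : SimpleGraph V) [Fintype V] : Prop :=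
  gammaC G = 3 ∧ ∀ u v : V, u ≠ v → ¬ G.Adj u v →
    gammaC (G ⊔ SimpleGraph.fromEdgeSet {s(u, v)}) < 3

/-- `G` is `3`-`γc`-vertex critical: `G` is `2`-connected, `γc(G) = 3` and deleting any
vertex decreases `γc`. -/
def VertexCritical3 (G : SimpleGraph V) [Fintype V] [DecidableEq V] : Prop :=
  2 ≤ kappa G ∧ gammaC G = 3 ∧ ∀ v : V, gammaC (G.induce {w | w ≠ v}) < 3

/-- `G` is maximal `3`-`γc`-vertex critical. -/
def MaximalVertexCritical3 (G : SimpleGraph V) [Fintype V] [DecidableEq V] : Prop :=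
  EdgeCritical3 G ∧ VertexCritical3 G

/-!
If a maximum independent set `I` and a maximum clique `W` meet, they meet in a single vertex
`v`, and `α + ω = n - 1` leaves exactly two vertices `x`, `y` outside `I ∪ W`. A vertex among
`x`, `y` with no neighbour in `I \ {v}` can replace `v` in `I`, and one adjacent to all of
`W \ {v}` can replace `v` in `W`; it remains to rule out that neither swap is possible.

Everything is read off from small connected dominating sets: `γc = 3` forbids a vertex or an
edge dominating `G`, vertex-criticality gives for every `v` a vertex or edge outside `N[v]`
dominating `G - v`, and edge-criticality one dominating `G + uz` for every non-edge `uz`.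
Applied at `v`, vertex-criticality yields (up to exchanging `x` and `y`) an edge `px` with
`p ∈ I` dominating `G - v`. Applied at a vertex `w ∈ W \ {v}` missed by `x`, it yields a pair
`{y, s}` dominating `G - w`, and every possible position of `s` contradicts either `γc = 3`
or edge-criticality at the non-edge `vs`.
-/

open SimpleGraph

/-- With `p = q` this is domination by the single vertex `p`. -/
def PairDominates (G : SimpleGraph V) (p q w : V) : Prop :=
  w = p ∨ w = q ∨ G.Adj p w ∨ G.Adj q w

section PairDominates

variable {G : SimpleGraph V} {p q u z w : V}

lemma pairDominates_comm : PairDominates G p q w ↔ PairDominates G q p w := by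
  unfold PairDominates; tauto

lemma PairDominates.of_self (h : PairDominates G p p w) : PairDominates G p q w := by
  unfold PairDominates at h ⊢; tauto

lemma forall_pairDominates_of_ne {v : V} (h : ∀ w, w ≠ v → PairDominates G p q w)
    (hv : PairDominates G p q v) : ∀ w, PairDominates G p q w := fun w => by
  by_cases hw : w = v
  · exact hw ▸ hv
  · exact h w hw

lemma PairDominates.of_sup_edge (h : PairDominates (G ⊔ edge u z) p q w) :
    PairDominates G p q w ∨ (w = z ∧ (p = u ∨ q = u)) ∨ (w = u ∧ (p = z ∨ q = z)) := by
  simp only [PairDominates, sup_adj, edge_adj] at h ⊢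
  tauto

lemma forall_ne_pairDominates_of_sup_edge (h : ∀ w, PairDominates (G ⊔ edge u z) u q w) :
    ∀ w, w ≠ z → PairDominates G u q w := fun w hw => by
  rcases (h w).of_sup_edge with hdom | hzw | ⟨rfl, -⟩
  exacts [hdom, absurd hzw.1 hw, .inl rfl]

end PairDominates

lemma connected_induce_pair_iff (G : SimpleGraph V) {p q : V} :
    (G.induce {p, q}).Connected ↔ p = q ∨ G.Adj p q := by
  refine ⟨fun h => or_iff_not_imp_left.2 fun hpq => ?_, ?_⟩
  · obtain ⟨walk⟩ := h.preconnected ⟨p, .inl rfl⟩ ⟨q, .inr rfl⟩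
    cases walk with
    | nil => exact absurd rfl hpq
    | @cons _ c _ hadj _ =>
      have hadj : G.Adj p c := hadj
      rcases c.2 with hc | hc
      · exact absurd (hc ▸ hadj) G.irrefl
      · rwa [hc] at hadj
  · rintro (rfl | hadj)
    · rw [Set.pair_eq_singleton, induce_singleton_eq_top]
      exact connected_top
    · exact induce_pair_connected_of_adj hadj

lemma isConnDomSet_pair_iff (G : SimpleGraph V) {p q : V} :
    IsConnDomSet G {p, q} ↔ (p = q ∨ G.Adj p q) ∧ ∀ w, PairDominates G p q w := by
  rw [IsConnDomSet, connected_induce_pair_iff, and_comm]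
  simp only [PairDominates, Set.mem_insert_iff, Set.mem_singleton_iff, exists_eq_or_imp,
    exists_eq_left, or_assoc]

lemma IsConnDomSet.mono {G H : SimpleGraph V} (hGH : G ≤ H) {D : Set V}
    (h : IsConnDomSet G D) : IsConnDomSet H D :=
  ⟨fun v => (h.1 v).imp_right fun ⟨u, hu, huv⟩ => ⟨u, hu, hGH huv⟩,
    h.2.mono fun _ _ hadj => hGH hadj⟩

section gammaC

variable {G : SimpleGraph V} [Fintype V]

lemma gammaC_le_card {D : Finset V} (h : IsConnDomSet G D) : gammaC G ≤ D.card :=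
  Nat.sInf_le ⟨D, rfl, h⟩

lemma exists_isConnDomSet_card_eq_gammaC (h : ∃ D : Finset V, IsConnDomSet G D) :
    ∃ D : Finset V, D.card = gammaC G ∧ IsConnDomSet G D := by
  obtain ⟨D, hD⟩ := h
  exact Nat.sInf_mem (s := {k | ∃ D : Finset V, D.card = k ∧ IsConnDomSet G D})
    ⟨D.card, D, rfl, hD⟩

lemma exists_isConnDomSet_of_gammaC_ne_zero (h : gammaC G ≠ 0) :
    ∃ D : Finset V, IsConnDomSet G D := by
  by_contra hD
  refine h (Nat.sInf_eq_zero.2 (.inr (Set.eq_empty_of_forall_notMem ?_)))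
  rintro _ ⟨D, -, hD'⟩
  exact hD ⟨D, hD'⟩

variable [DecidableEq V]

lemma gammaC_le_two_iff (h : ∃ D : Finset V, IsConnDomSet G D) :
    gammaC G ≤ 2 ↔ ∃ p q, (p = q ∨ G.Adj p q) ∧ ∀ w, PairDominates G p q w := by
  refine ⟨fun h2 => ?_, fun ⟨p, q, hpq⟩ => ?_⟩
  · obtain ⟨D, hcard, hD⟩ := exists_isConnDomSet_card_eq_gammaC h
    have hpos : 0 < D.card := by
      obtain ⟨⟨u, hu⟩⟩ := hD.2.nonempty
      exact Finset.card_pos.2 ⟨u, hu⟩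
    have hle : D.card ≤ 2 := hcard ▸ h2
    obtain ⟨p, q, rfl⟩ : ∃ p q, D = {p, q} := by
      interval_cases hD : D.card
      · obtain ⟨p, rfl⟩ := Finset.card_eq_one.1 hD
        exact ⟨p, p, (Finset.pair_eq_singleton p).symm⟩
      · obtain ⟨p, q, -, rfl⟩ := Finset.card_eq_two.1 hD
        exact ⟨p, q, rfl⟩
    exact ⟨p, q, (isConnDomSet_pair_iff G).1 (by simpa using hD)⟩
  · have hD : IsConnDomSet G ↑({p, q} : Finset V) := by
      simpa using (isConnDomSet_pair_iff G).2 hpq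
    exact (gammaC_le_card hD).trans Finset.card_le_two

lemma not_forall_pairDominates (hG : 2 < gammaC G) {p q : V} (hpq : p = q ∨ G.Adj p q) :
    ¬ ∀ w, PairDominates G p q w := fun hdom =>
  have hD := exists_isConnDomSet_of_gammaC_ne_zero (by omega)
  absurd ((gammaC_le_two_iff hD).2 ⟨p, q, hpq, hdom⟩) (by omega)

end gammaC

lemma connected_induce_ne_of_two_le_kappa {G : SimpleGraph V} [Fintype V] (h : 2 ≤ kappa G)
    (v : V) : (G.induce {w | w ≠ v}).Connected := by
  by_contra hv
  have : kappa G ≤ 1 := Nat.sInf_le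
    ⟨{v}, Finset.card_singleton v, .inl (by rwa [Finset.coe_singleton, Set.compl_singleton_eq])⟩
  omega

namespace VertexCritical3

variable {G : SimpleGraph V} [Fintype V] [DecidableEq V]

lemma exists_pairDominates_compl (hG : VertexCritical3 G) (v : V) :
    ∃ p q, p ≠ v ∧ q ≠ v ∧ (p = q ∨ G.Adj p q) ∧ ¬ G.Adj v p ∧ ¬ G.Adj v q ∧
      ∀ w, w ≠ v → PairDominates G p q w := by
  obtain ⟨hκ, hγ, hcrit⟩ := hG
  have hconn := connected_induce_ne_of_two_le_kappa hκ v
  have hD : ∃ D : Finset {w | w ≠ v}, IsConnDomSet (G.induce {w | w ≠ v}) D := by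
    refine ⟨Finset.univ, ?_⟩
    rw [Finset.coe_univ]
    exact ⟨fun _ => .inl trivial, (induceUnivIso _).connected_iff.2 hconn⟩
  obtain ⟨⟨p, hp⟩, ⟨q, hq⟩, hpq, hdom⟩ :=
    (gammaC_le_two_iff hD).1 (Nat.le_of_lt_succ (hcrit v))
  replace hdom : ∀ w, w ≠ v → PairDominates G p q w := fun w hw => by
    simpa [PairDominates] using hdom ⟨w, hw⟩
  replace hpq : p = q ∨ G.Adj p q := by simpa using hpq
  have hγ : 2 < gammaC G := by omega
  refine ⟨p, q, hp, hq, hpq, fun hvp => ?_, fun hvq => ?_, hdom⟩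
  · exact not_forall_pairDominates hγ hpq
      (forall_pairDominates_of_ne hdom (.inr (.inr (.inl hvp.symm))))
  · exact not_forall_pairDominates hγ hpq
      (forall_pairDominates_of_ne hdom (.inr (.inr (.inr hvq.symm))))

lemma exists_adj_not_adj (hG : VertexCritical3 G) {v w : V} (h : G.Adj v w) :
    ∃ u, G.Adj v u ∧ u ≠ w ∧ ¬ G.Adj w u := by
  obtain ⟨p, q, hp, hq, -, hwp, hwq, hdom⟩ := hG.exists_pairDominates_compl w
  rcases hdom v h.ne with rfl | rfl | hpv | hqv
  · exact absurd h.symm hwp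
  · exact absurd h.symm hwq
  · exact ⟨p, hpv.symm, hp, hwp⟩
  · exact ⟨q, hqv.symm, hq, hwq⟩

end VertexCritical3

lemma EdgeCritical3.pairDominates_of_not_adj {G : SimpleGraph V} [Fintype V] [DecidableEq V]
    (hG : EdgeCritical3 G) {u z : V} (huz : u ≠ z) (h : ¬ G.Adj u z) :
    (∀ w, PairDominates G u z w) ∨
      (∃ d, (u = d ∨ G.Adj u d) ∧ ∀ w, w ≠ z → PairDominates G u d w) ∨
      (∃ d, (z = d ∨ G.Adj z d) ∧ ∀ w, w ≠ u → PairDominates G z d w) := by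
  obtain ⟨hγ, hcrit⟩ := hG
  have hD := exists_isConnDomSet_of_gammaC_ne_zero (G := G) (by omega)
  obtain ⟨c, d, hcd, hdom⟩ := (gammaC_le_two_iff (G := G ⊔ edge u z)
    (hD.imp fun _ => IsConnDomSet.mono le_sup_left)).1 (Nat.le_of_lt_succ (hcrit u z huz h))
  replace hcd : c = d ∨ G.Adj c d ∨ (c = u ∧ d = z) ∨ (c = z ∧ d = u) := by
    simp only [sup_adj, edge_adj] at hcd
    tauto
  by_cases hu : c = u ∨ d = u <;> by_cases hz : c = z ∨ d = z
  · have hdom_uz : ∀ w, PairDominates (G ⊔ edge u z) u z w := by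
      rcases hu with rfl | rfl <;> rcases hz with rfl | rfl
      exacts [absurd rfl huz, hdom, fun w => pairDominates_comm.1 (hdom w), absurd rfl huz]
    refine .inl fun w => ?_
    rcases (hdom_uz w).of_sup_edge with hw | ⟨rfl, -⟩ | ⟨rfl, -⟩
    exacts [hw, .inr (.inl rfl), .inl rfl]
  · refine .inr (.inl ?_)
    rcases hu with rfl | rfl
    · exact ⟨d, by tauto, forall_ne_pairDominates_of_sup_edge hdom⟩
    · exact ⟨c, by tauto, forall_ne_pairDominates_of_sup_edge
        fun w => pairDominates_comm.1 (hdom w)⟩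
  · refine .inr (.inr ?_)
    rw [edge_comm] at hdom
    rcases hz with rfl | rfl
    · exact ⟨d, by tauto, forall_ne_pairDominates_of_sup_edge hdom⟩
    · exact ⟨c, by tauto, forall_ne_pairDominates_of_sup_edge
        fun w => pairDominates_comm.1 (hdom w)⟩
  · refine absurd (fun w => ?_) (not_forall_pairDominates (G := G) (by omega) (by tauto))
    rcases (hdom w).of_sup_edge with h | ⟨-, h⟩ | ⟨-, h⟩
    exacts [h, absurd h hu, absurd h hz]

lemma MaximalVertexCritical3.two_lt_gammaC {G : SimpleGraph V} [Fintype V] [DecidableEq V]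
    (hG : MaximalVertexCritical3 G) : 2 < gammaC G := by
  rw [hG.1.1]; norm_num

lemma exists_card_eq_sSup [Fintype V] (P : Finset V → Prop) (h : P ∅) :
    ∃ s, P s ∧ s.card = sSup {k | ∃ s : Finset V, s.card = k ∧ P s} := by
  have hne : {k | ∃ s : Finset V, s.card = k ∧ P s}.Nonempty := ⟨0, ∅, rfl, h⟩
  obtain ⟨s, hs, hP⟩ := Nat.sSup_mem hne
    ⟨Fintype.card V, fun _ ⟨s, hs, _⟩ => hs ▸ s.card_le_univ⟩
  exact ⟨s, hP, hs⟩

lemma exists_isIndepSet_card_eq_alpha (G : SimpleGraph V) [Fintype V] :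
    ∃ I : Finset V, G.IsIndepSet I ∧ I.card = alpha G :=
  exists_card_eq_sSup (fun I : Finset V => G.IsIndepSet I) (by simp)

lemma exists_isClique_card_eq_omegaNum (G : SimpleGraph V) [Fintype V] :
    ∃ W : Finset V, G.IsClique W ∧ W.card = omegaNum G :=
  exists_card_eq_sSup (fun W : Finset V => G.IsClique W) (by simp)

section swap

variable [DecidableEq V] {G : SimpleGraph V} {I W : Finset V} {v z : V}

lemma inter_eq_singleton_of_isIndepSet_of_isClique (hI : G.IsIndepSet I) (hW : G.IsClique W)
    (hv : v ∈ I ∩ W) : I ∩ W = {v} := by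
  refine Finset.eq_singleton_iff_unique_mem.2 ⟨hv, fun a ha => by_contra fun hav => ?_⟩
  rw [Finset.mem_inter] at ha hv
  exact hI ha.1 hv.1 hav (hW ha.2 hv.2 hav)

lemma card_insert_erase (hv : v ∈ I) (hz : z ∉ I) : (insert z (I.erase v)).card = I.card := by
  rw [Finset.card_insert_of_notMem fun hz' => hz (Finset.mem_of_mem_erase hz'),
    Finset.card_erase_add_one hv]

lemma insert_erase_inter_eq_empty (hIW : I ∩ W = {v}) (hz : z ∉ W) :
    insert z (I.erase v) ∩ W = ∅ := by
  refine Finset.eq_empty_of_forall_notMem fun a ha => ?_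
  simp only [Finset.mem_inter, Finset.mem_insert, Finset.mem_erase] at ha
  obtain ⟨rfl | ⟨hav, haI⟩, haW⟩ := ha
  · exact hz haW
  · exact hav (Finset.mem_singleton.1 (hIW ▸ Finset.mem_inter.2 ⟨haI, haW⟩))

lemma exists_disjoint_swap_or (hI : G.IsIndepSet I) (hW : G.IsClique W) (hIW : I ∩ W = {v})
    (hzI : z ∉ I) (hzW : z ∉ W) :
    (∃ I' W' : Finset V, G.IsIndepSet I' ∧ I'.card = I.card ∧ G.IsClique W' ∧
      W'.card = W.card ∧ I' ∩ W' = ∅) ∨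
    ((∃ a ∈ I, a ≠ v ∧ G.Adj z a) ∧ (∃ w ∈ W, w ≠ v ∧ ¬ G.Adj z w)) := by
  have hv : v ∈ I ∩ W := hIW ▸ Finset.mem_singleton_self v
  rw [Finset.mem_inter] at hv
  by_cases hza : ∃ a ∈ I, a ≠ v ∧ G.Adj z a
  · by_cases hzw : ∃ w ∈ W, w ≠ v ∧ ¬ G.Adj z w
    · exact .inr ⟨hza, hzw⟩
    refine .inl ⟨I, insert z (W.erase v), hI, rfl, ?_, card_insert_erase hv.2 hzW, ?_⟩
    · rw [Finset.coe_insert, isClique_insert, Finset.coe_erase]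
      exact ⟨hW.subset Set.sdiff_subset,
        fun b hb _ => by_contra fun hzb => hzw ⟨b, hb.1, hb.2, hzb⟩⟩
    · rw [Finset.inter_comm]
      exact insert_erase_inter_eq_empty (Finset.inter_comm I W ▸ hIW) hzI
  · refine .inl ⟨insert z (I.erase v), W, ?_, card_insert_erase hv.1 hzI, hW, rfl,
      insert_erase_inter_eq_empty hIW hzW⟩
    rw [Finset.coe_insert, IsIndepSet, Set.pairwise_insert, Finset.coe_erase]
    exact ⟨hI.mono Set.sdiff_subset, fun b hb _ =>
      ⟨fun hzb => hza ⟨b, hb.1, hb.2, hzb⟩, fun hbz => hza ⟨b, hb.1, hb.2, hbz.symm⟩⟩⟩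

lemma exists_two_notMem_union [Fintype V] (hIW : I ∩ W = {v})
    (hcard : I.card + W.card = Fintype.card V - 1) :
    ∃ x y, x ≠ y ∧ x ∉ I ∧ x ∉ W ∧ y ∉ I ∧ y ∉ W ∧
      ∀ u, u ∈ I ∨ u ∈ W ∨ u = x ∨ u = y := by
  have hv : v ∈ I ∩ W := hIW ▸ Finset.mem_singleton_self v
  rw [Finset.mem_inter] at hv
  have hunion : (I ∪ W).card + 1 = I.card + W.card := by
    rw [← Finset.card_union_add_card_inter, hIW, Finset.card_singleton]
  have hI := Finset.card_pos.2 ⟨v, hv.1⟩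
  have hW := Finset.card_pos.2 ⟨v, hv.2⟩
  obtain ⟨x, y, hxy, hcompl⟩ : ∃ x y, x ≠ y ∧ (I ∪ W)ᶜ = {x, y} := by
    refine Finset.card_eq_two.1 ?_
    rw [Finset.card_compl]
    omega
  have hmem : ∀ u, u ∉ I ∧ u ∉ W ↔ u = x ∨ u = y := fun u => by
    simpa [not_or] using Finset.ext_iff.1 hcompl u
  obtain ⟨hxI, hxW⟩ := (hmem x).2 (.inl rfl)
  obtain ⟨hyI, hyW⟩ := (hmem y).2 (.inr rfl)
  refine ⟨x, y, hxy, hxI, hxW, hyI, hyW, fun u => ?_⟩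
  by_cases hu : u ∈ I ∨ u ∈ W
  · exact hu.elim .inl (.inr ∘ .inl)
  · exact .inr (.inr ((hmem u).1 (not_or.1 hu)))

end swap

/-- Neither `x` nor `y`, the two vertices outside `I ∪ W`, can replace `v` (the vertex of
`I ∩ W`) in `I` or in `W`. -/
structure Obstruction (G : SimpleGraph V) (I W : Finset V) (v x y : V) : Prop where
  isIndepSet : G.IsIndepSet I
  isClique : G.IsClique W
  v_mem_I : v ∈ I
  v_mem_W : v ∈ W
  cover : ∀ u, u ∈ I ∨ u ∈ W ∨ u = x ∨ u = y
  x_notMem_I : x ∉ I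
  x_notMem_W : x ∉ W
  y_notMem_I : y ∉ I
  y_notMem_W : y ∉ W
  x_ne_y : x ≠ y
  exists_adj_x : ∃ a ∈ I, a ≠ v ∧ G.Adj x a
  exists_adj_y : ∃ a ∈ I, a ≠ v ∧ G.Adj y a
  exists_not_adj_x : ∃ w ∈ W, w ≠ v ∧ ¬ G.Adj x w
  exists_not_adj_y : ∃ w ∈ W, w ≠ v ∧ ¬ G.Adj y w

namespace Obstruction

variable {G : SimpleGraph V} {I W : Finset V} {v x y a p q : V}

lemma symm (h : Obstruction G I W v x y) : Obstruction G I W v y x where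
  __ := h
  cover u := by rcases h.cover u with hu | hu | hu | hu <;> simp [hu]
  x_notMem_I := h.y_notMem_I
  x_notMem_W := h.y_notMem_W
  y_notMem_I := h.x_notMem_I
  y_notMem_W := h.x_notMem_W
  x_ne_y := h.x_ne_y.symm
  exists_adj_x := h.exists_adj_y
  exists_adj_y := h.exists_adj_x
  exists_not_adj_x := h.exists_not_adj_y
  exists_not_adj_y := h.exists_not_adj_x

lemma x_ne_v (h : Obstruction G I W v x y) : x ≠ v :=
  fun hxv => h.x_notMem_I (hxv ▸ h.v_mem_I)

lemma not_adj_of_mem_I (h : Obstruction G I W v x y) (ha : a ∈ I) : ¬ G.Adj v a :=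
  fun hva => h.isIndepSet h.v_mem_I ha hva.ne hva

lemma adj_of_mem_W (h : Obstruction G I W v x y) (ha : a ∈ W) (hav : a ≠ v) : G.Adj v a :=
  h.isClique h.v_mem_W ha hav.symm

lemma eq_of_mem_I_of_mem_W (h : Obstruction G I W v x y) (ha : a ∈ I) (ha' : a ∈ W) : a = v :=
  by_contra fun hav => h.not_adj_of_mem_I ha (h.adj_of_mem_W ha' hav)

lemma mem_I_or_of_not_adj (h : Obstruction G I W v x y) (hav : a ≠ v) (hva : ¬ G.Adj v a) :
    a ∈ I ∨ a = x ∨ a = y := by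
  rcases h.cover a with ha | ha | ha | ha
  exacts [.inl ha, absurd (h.adj_of_mem_W ha hav) hva, .inr (.inl ha), .inr (.inr ha)]

lemma mem_W_or_of_adj (h : Obstruction G I W v x y) (hva : G.Adj v a) :
    a ∈ W ∨ a = x ∨ a = y := by
  rcases h.cover a with ha | ha | ha | ha
  exacts [absurd hva (h.not_adj_of_mem_I ha), .inl ha, .inr (.inl ha), .inr (.inr ha)]

lemma not_forall_ne_pairDominates_of_adj_x (h : Obstruction G I W v x y) (hvx : G.Adj v x)
    (hp : p = x ∨ p = y) (hq : q = x ∨ q = y) (hvp : ¬ G.Adj v p) (hvq : ¬ G.Adj v q) :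
    ¬ ∀ u, u ≠ v → PairDominates G p q u := by
  obtain rfl : p = y := hp.resolve_left (by rintro rfl; exact hvp hvx)
  obtain rfl : q = p := hq.resolve_left (by rintro rfl; exact hvq hvx)
  obtain ⟨w, hw, hwv, hpw⟩ := h.exists_not_adj_y
  intro hdom
  rcases hdom w hwv with rfl | rfl | hpw' | hpw'
  exacts [h.y_notMem_W hw, h.y_notMem_W hw, hpw hpw', hpw hpw']

variable [Fintype V] [DecidableEq V]

lemma exists_adj_not_adj (hG : VertexCritical3 G) (h : Obstruction G I W v x y) {w : V}
    (hw : w ∈ W) (hwv : w ≠ v) : ∃ u, (u = x ∨ u = y) ∧ G.Adj v u ∧ ¬ G.Adj w u := by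
  obtain ⟨u, hvu, huw, hwu⟩ := hG.exists_adj_not_adj (h.adj_of_mem_W hw hwv)
  rcases h.mem_W_or_of_adj hvu with hu | hu
  · exact absurd (h.isClique hw hu huw.symm) hwu
  · exact ⟨u, hu, hvu, hwu⟩

lemma adj_x_or_adj_y (hG : VertexCritical3 G) (h : Obstruction G I W v x y) :
    G.Adj v x ∨ G.Adj v y := by
  obtain ⟨w, hw, hwv, -⟩ := h.exists_not_adj_x
  obtain ⟨u, rfl | rfl, hvu, -⟩ := h.exists_adj_not_adj hG hw hwv
  exacts [.inl hvu, .inr hvu]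

lemma exists_pairDominates_y (hG : VertexCritical3 G) (h : Obstruction G I W v x y)
    (hvx : ¬ G.Adj v x) {w : V} (hw : w ∈ W) (hwv : w ≠ v) :
    ∃ s, s ≠ w ∧ ¬ G.Adj w s ∧ (y = s ∨ G.Adj y s) ∧
      ∀ u, u ≠ w → PairDominates G y s u := by
  obtain ⟨p, q, hp, hq, hpq, hwp, hwq, hdom⟩ := hG.exists_pairDominates_compl w
  have hwv' : G.Adj w v := (h.adj_of_mem_W hw hwv).symm
  have eq_y : ∀ r, r ≠ w → ¬ G.Adj w r → G.Adj r v → r = y := fun r hrw hwr hrv => by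
    rcases h.mem_W_or_of_adj hrv.symm with hr | rfl | rfl
    exacts [absurd (h.isClique hw hr hrw.symm) hwr, absurd hrv.symm hvx, rfl]
  rcases hdom v hwv.symm with rfl | rfl | hpv | hqv
  · exact absurd hwv' hwp
  · exact absurd hwv' hwq
  · obtain rfl := eq_y p hp hwp hpv
    exact ⟨q, hq, hwq, hpq, hdom⟩
  · obtain rfl := eq_y q hq hwq hqv
    exact ⟨p, hp, hwp, hpq.imp Eq.symm Adj.symm, fun u hu => pairDominates_comm.1 (hdom u hu)⟩

end Obstruction

/-- The case where vertex-criticality at `v` provides the edge `px` with `p ∈ I`; `w` is a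
vertex of `W` missed by `x`. -/
structure PinnedObstruction (G : SimpleGraph V) (I W : Finset V) (v x y p w : V) : Prop
    extends Obstruction G I W v x y where
  p_mem_I : p ∈ I
  p_ne_v : p ≠ v
  not_adj_v_x : ¬ G.Adj v x
  adj_p_x : G.Adj p x
  pairDominates : ∀ u, u ≠ v → PairDominates G p x u
  w_mem_W : w ∈ W
  w_ne_v : w ≠ v
  not_adj_x_w : ¬ G.Adj x w

namespace PinnedObstruction

variable {G : SimpleGraph V} {I W : Finset V} {v x y p w a s : V}

lemma adj_x_of_mem_I (h : PinnedObstruction G I W v x y p w) (ha : a ∈ I) (hav : a ≠ v) :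
    G.Adj x a := by
  by_cases hap : a = p
  · exact hap ▸ h.adj_p_x.symm
  rcases h.pairDominates a hav with rfl | rfl | hpa | hxa
  · exact absurd rfl hap
  · exact absurd ha h.x_notMem_I
  · exact absurd hpa (h.isIndepSet h.p_mem_I ha (Ne.symm hap))
  · exact hxa

lemma adj_p_w (h : PinnedObstruction G I W v x y p w) : G.Adj p w := by
  rcases h.pairDominates w h.w_ne_v with rfl | rfl | hpw | hxw
  · exact absurd (h.eq_of_mem_I_of_mem_W h.p_mem_I h.w_mem_W) h.p_ne_v
  · exact absurd h.w_mem_W h.x_notMem_W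
  · exact hpw
  · exact absurd hxw h.not_adj_x_w

variable [Fintype V] [DecidableEq V]

lemma adj_v_y (hG : VertexCritical3 G) (h : PinnedObstruction G I W v x y p w) : G.Adj v y := by
  obtain ⟨u, rfl | rfl, hvu, -⟩ := h.exists_adj_not_adj hG h.w_mem_W h.w_ne_v
  exacts [absurd hvu h.not_adj_v_x, hvu]

lemma not_adj_y_of_mem_W (hG : VertexCritical3 G) (h : PinnedObstruction G I W v x y p w)
    (ha : a ∈ W) (hav : a ≠ v) : ¬ G.Adj y a := by
  obtain ⟨u, rfl | rfl, hvu, hau⟩ := h.exists_adj_not_adj hG ha hav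
  exacts [absurd hvu h.not_adj_v_x, fun hya => hau hya.symm]

lemma not_forall_ne_v_pairDominates (hG : MaximalVertexCritical3 G)
    (h : PinnedObstruction G I W v x y p w) (hs : s ∈ I) (hws : ¬ G.Adj w s) {d : V}
    (hsd : s = d ∨ G.Adj s d) : ¬ ∀ u, u ≠ v → PairDominates G s d u := by
  intro hd
  have hsv : s ≠ v := by rintro rfl; exact hws (h.adj_of_mem_W h.w_mem_W h.w_ne_v).symm
  have hvd : ¬ G.Adj v d := fun hvd => not_forall_pairDominates hG.two_lt_gammaC hsd
    (forall_pairDominates_of_ne hd (.inr (.inr (.inr hvd.symm))))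
  have hdv : d ≠ v := by
    rintro rfl
    exact hsd.elim hsv fun hsv' => h.not_adj_of_mem_I hs hsv'.symm
  rcases hd w h.w_ne_v with rfl | rfl | hsw | hdw
  · exact hsv (h.eq_of_mem_I_of_mem_W hs h.w_mem_W)
  · exact hvd (h.adj_of_mem_W h.w_mem_W h.w_ne_v)
  · exact hws hsw.symm
  rcases h.mem_I_or_of_not_adj hdv hvd with hdI | rfl | rfl
  · rcases hsd with rfl | hsd
    · exact hws hdw.symm
    · exact h.isIndepSet hs hdI hsd.ne hsd
  · exact h.not_adj_x_w hdw
  · exact h.not_adj_y_of_mem_W hG.2 h.w_mem_W h.w_ne_v hdw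

lemma notMem_I (hG : MaximalVertexCritical3 G) (h : PinnedObstruction G I W v x y p w)
    (hws : ¬ G.Adj w s) (hys : G.Adj y s) (hdom : ∀ u, u ≠ w → PairDominates G y s u) :
    s ∉ I := by
  intro hs
  have hsv : s ≠ v := by rintro rfl; exact hws (h.adj_of_mem_W h.w_mem_W h.w_ne_v).symm
  have hs_W : ∀ u ∈ W, u ≠ v → u ≠ w → G.Adj s u := fun u hu huv huw => by
    rcases hdom u huw with rfl | rfl | hyu | hsu
    · exact absurd hu h.y_notMem_W
    · exact absurd (h.eq_of_mem_I_of_mem_W hs hu) hsv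
    · exact absurd hyu (h.not_adj_y_of_mem_W hG.2 hu huv)
    · exact hsu
  rcases hG.1.pairDominates_of_not_adj (Ne.symm hsv) (h.not_adj_of_mem_I hs) with
    hall | ⟨d, hvd, hd⟩ | ⟨d, hsd, hd⟩
  · rcases hall p with hpv | rfl | hvp | hsp
    · exact h.p_ne_v hpv
    · exact hws h.adj_p_w.symm
    · exact h.not_adj_of_mem_I h.p_mem_I hvp
    · exact h.isIndepSet hs h.p_mem_I (fun hsp' => hws (hsp' ▸ h.adj_p_w.symm)) hsp
  · -- `x` is dominated by `d`, which lies in `W` or is `y`, and then `s` is dominated too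
    have hdx : G.Adj d x := by
      rcases hd x fun hxs => h.x_notMem_I (hxs ▸ hs) with hxv | rfl | hvx | hdx
      · exact absurd hxv h.x_ne_v
      · exact absurd hvd (by rintro (hvx | hvx); exacts [h.x_ne_v hvx.symm, h.not_adj_v_x hvx])
      · exact absurd hvx h.not_adj_v_x
      · exact hdx
    have hvd' : G.Adj v d := hvd.resolve_left fun hvd => h.not_adj_v_x (hvd ▸ hdx)
    refine not_forall_pairDominates hG.two_lt_gammaC hvd
      (forall_pairDominates_of_ne hd (.inr (.inr (.inr ?_))))
    rcases h.mem_W_or_of_adj hvd' with hdW | rfl | rfl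
    · refine (hs_W d hdW hvd'.ne.symm ?_).symm
      rintro rfl
      exact h.not_adj_x_w hdx.symm
    · exact absurd hdx G.irrefl
    · exact hys
  · exact h.not_forall_ne_v_pairDominates hG hs hws hsd hd

lemma exists_pairDominates_w (hG : VertexCritical3 G) (h : PinnedObstruction G I W v x y p w)
    (hyx : G.Adj y x) (hW : ∀ u ∈ W, u = v ∨ u = w) :
    ∃ d ∈ I, d ≠ v ∧ G.Adj w d ∧ ∀ u, u ≠ y → PairDominates G w d u := by
  obtain ⟨q, r, hq, hr, hqr, hyq, hyr, hdom⟩ := hG.exists_pairDominates_compl y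
  have eq_w : ∀ t, t ≠ y → G.Adj t v → t = w := fun t hty htv => by
    rcases h.mem_W_or_of_adj htv.symm with ht | rfl | rfl
    exacts [(hW t ht).resolve_left htv.ne, absurd htv.symm h.not_adj_v_x, absurd rfl hty]
  have mem_I : ∀ t, t ≠ y → G.Adj t x → t ∈ I ∧ t ≠ v := fun t hty htx => by
    have htv : t ≠ v := by rintro rfl; exact h.not_adj_v_x htx
    have hvt : ¬ G.Adj v t := fun hvt => by
      rcases h.mem_W_or_of_adj hvt with ht | rfl | rfl
      · rcases hW t ht with rfl | rfl
        exacts [G.irrefl hvt, h.not_adj_x_w htx.symm]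
      · exact G.irrefl htx
      · exact hty rfl
    rcases h.mem_I_or_of_not_adj htv hvt with ht | rfl | rfl
    exacts [⟨ht, htv⟩, absurd htx G.irrefl, absurd rfl hty]
  have hvy := h.adj_v_y hG
  have hwI : w ∉ I := fun hw => h.w_ne_v (h.eq_of_mem_I_of_mem_W hw h.w_mem_W)
  rcases hdom v hvy.ne with rfl | rfl | hqv | hrv
  · exact absurd hvy.symm hyq
  · exact absurd hvy.symm hyr
  · obtain rfl := eq_w q hq hqv
    rcases hdom x h.x_ne_y with rfl | rfl | hqx | hrx
    · exact absurd hyx hyq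
    · exact absurd hyx hyr
    · exact absurd (mem_I q hq hqx).1 hwI
    · obtain ⟨hrI, hrv⟩ := mem_I r hr hrx
      exact ⟨r, hrI, hrv, hqr.resolve_left (by rintro rfl; exact hwI hrI), hdom⟩
  · obtain rfl := eq_w r hr hrv
    rcases hdom x h.x_ne_y with rfl | rfl | hqx | hrx
    · exact absurd hyx hyq
    · exact absurd hyx hyr
    · obtain ⟨hqI, hqv⟩ := mem_I q hq hqx
      exact ⟨q, hqI, hqv, (hqr.resolve_left (by rintro rfl; exact hwI hqI)).symm,
        fun u hu => pairDominates_comm.1 (hdom u hu)⟩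
    · exact absurd (mem_I r hr hrx).1 hwI

lemma adj_w_of_mem_I (hG : VertexCritical3 G) (h : PinnedObstruction G I W v x y p w)
    (hyx : G.Adj y x) (hW : ∀ u ∈ W, u = v ∨ u = w) (ha : a ∈ I) (hav : a ≠ v) :
    G.Adj w a := by
  obtain ⟨d, hd, hdv, hwd, hdom⟩ := h.exists_pairDominates_w hG hyx hW
  rcases hdom a fun hay => h.y_notMem_I (hay ▸ ha) with rfl | rfl | hwa | hda
  · exact absurd (h.eq_of_mem_I_of_mem_W ha h.w_mem_W) hav
  · exact hwd
  · exact hwa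
  · exact absurd hda (h.isIndepSet hd ha hda.ne)

lemma ne_x (hG : MaximalVertexCritical3 G) (h : PinnedObstruction G I W v x y p w)
    (hys : G.Adj y s) (hdom : ∀ u, u ≠ w → PairDominates G y s u) : s ≠ x := by
  rintro rfl
  by_cases hW : ∃ u ∈ W, u ≠ v ∧ u ≠ w
  · obtain ⟨u, hu, huv, huw⟩ := hW
    have hsu : G.Adj s u := by
      rcases hdom u huw with rfl | rfl | hyu | hsu
      exacts [absurd hu h.y_notMem_W, absurd hu h.x_notMem_W,
        absurd hyu (h.not_adj_y_of_mem_W hG.2 hu huv), hsu]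
    refine not_forall_pairDominates hG.two_lt_gammaC (.inr hsu) fun t => ?_
    rcases h.cover t with ht | ht | rfl | rfl
    · by_cases htv : t = v
      · exact .inr (.inr (.inr (htv ▸ (h.adj_of_mem_W hu huv).symm)))
      · exact .inr (.inr (.inl (h.adj_x_of_mem_I ht htv)))
    · by_cases htu : t = u
      · exact .inr (.inl htu)
      · exact .inr (.inr (.inr (h.isClique hu ht (Ne.symm htu))))
    · exact .inl rfl
    · exact .inr (.inr (.inl hys.symm))
  · replace hW : ∀ u ∈ W, u = v ∨ u = w := fun u hu => by
      by_contra! huvw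
      exact hW ⟨u, hu, huvw⟩
    obtain ⟨a, ha, hav, hya⟩ := h.exists_adj_y
    have hwv := (h.adj_of_mem_W h.w_mem_W h.w_ne_v).symm
    refine not_forall_pairDominates hG.two_lt_gammaC
      (.inr (h.adj_w_of_mem_I hG.2 hys hW ha hav)) fun t => ?_
    rcases h.cover t with ht | ht | rfl | rfl
    · by_cases htv : t = v
      · exact .inr (.inr (.inl (htv ▸ hwv)))
      · exact .inr (.inr (.inl (h.adj_w_of_mem_I hG.2 hys hW ht htv)))
    · rcases hW t ht with rfl | rfl
      exacts [.inr (.inr (.inl hwv)), .inl rfl]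
    · exact .inr (.inr (.inr (h.adj_x_of_mem_I ha hav).symm))
    · exact .inr (.inr (.inr hya.symm))

end PinnedObstruction

namespace MaximalVertexCritical3

variable {G : SimpleGraph V} [Fintype V] [DecidableEq V] {I W : Finset V} {v x y p q : V}

lemma not_pinnedObstruction (hG : MaximalVertexCritical3 G) {w : V} :
    ¬ PinnedObstruction G I W v x y p w := by
  intro h
  obtain ⟨s, hsw, hws, hys, hdom⟩ :=
    h.exists_pairDominates_y hG.2 h.not_adj_v_x h.w_mem_W h.w_ne_v
  rcases hys with rfl | hys
  · -- `y` alone dominates `G - w`, so the edge `yv` dominates `G`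
    refine not_forall_pairDominates hG.two_lt_gammaC (.inr (h.adj_v_y hG.2).symm)
      (forall_pairDominates_of_ne (fun u hu => (hdom u hu).of_self)
        (.inr (.inr (.inr (h.adj_of_mem_W h.w_mem_W h.w_ne_v)))))
  rcases h.cover s with hs | hs | rfl | rfl
  · exact h.notMem_I hG hws hys hdom hs
  · exact hws (h.isClique h.w_mem_W hs hsw.symm)
  · exact h.ne_x hG hys hdom rfl
  · exact G.irrefl hys

lemma not_forall_ne_pairDominates_of_adj (hG : MaximalVertexCritical3 G)
    (h : Obstruction G I W v x y) (hp : p ∈ I) (hpv : p ≠ v) (hvx : ¬ G.Adj v x)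
    (hpx : G.Adj p x) : ¬ ∀ u, u ≠ v → PairDominates G p x u := fun hdom =>
  let ⟨_, hw, hwv, hxw⟩ := h.exists_not_adj_x
  hG.not_pinnedObstruction ⟨h, hp, hpv, hvx, hpx, hdom, hw, hwv, hxw⟩

lemma not_forall_ne_pairDominates_of_mem_I (hG : MaximalVertexCritical3 G)
    (h : Obstruction G I W v x y) (hp : p ∈ I) (hpv : p ≠ v) (hqv : q ≠ v)
    (hvq : ¬ G.Adj v q) (hpq : p = q ∨ G.Adj p q) :
    ¬ ∀ u, u ≠ v → PairDominates G p q u := by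
  intro hdom
  rcases h.mem_I_or_of_not_adj hqv hvq with hq | rfl | rfl
  · obtain rfl : p = q := hpq.resolve_right fun hpq => h.isIndepSet hp hq hpq.ne hpq
    have hpx : G.Adj p x := by
      rcases hdom x h.x_ne_v with rfl | rfl | hpx | hpx
      exacts [absurd hp h.x_notMem_I, absurd hp h.x_notMem_I, hpx, hpx]
    have hdom' : ∀ u, u ≠ v → PairDominates G p x u := fun u hu => (hdom u hu).of_self
    by_cases hvx : G.Adj v x
    · exact not_forall_pairDominates hG.two_lt_gammaC (.inr hpx)
        (forall_pairDominates_of_ne hdom' (.inr (.inr (.inr hvx.symm))))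
    · exact hG.not_forall_ne_pairDominates_of_adj h hp hpv hvx hpx hdom'
  · exact hG.not_forall_ne_pairDominates_of_adj h hp hpv hvq
      (hpq.resolve_left fun hpx => h.x_notMem_I (hpx ▸ hp)) hdom
  · exact hG.not_forall_ne_pairDominates_of_adj h.symm hp hpv hvq
      (hpq.resolve_left fun hpy => h.y_notMem_I (hpy ▸ hp)) hdom

lemma not_obstruction (hG : MaximalVertexCritical3 G) : ¬ Obstruction G I W v x y := by
  intro h
  obtain ⟨p, q, hpv, hqv, hpq, hvp, hvq, hdom⟩ := hG.2.exists_pairDominates_compl v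
  rcases h.mem_I_or_of_not_adj hpv hvp with hp | hp
  · exact hG.not_forall_ne_pairDominates_of_mem_I h hp hpv hqv hvq hpq hdom
  rcases h.mem_I_or_of_not_adj hqv hvq with hq | hq
  · exact hG.not_forall_ne_pairDominates_of_mem_I h hq hqv hpv hvp (hpq.imp Eq.symm .symm)
      fun u hu => pairDominates_comm.1 (hdom u hu)
  rcases h.adj_x_or_adj_y hG.2 with hvx | hvy
  · exact h.not_forall_ne_pairDominates_of_adj_x hvx hp hq hvp hvq hdom
  · exact h.symm.not_forall_ne_pairDominates_of_adj_x hvy hp.symm hq.symm hvp hvq hdom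

end MaximalVertexCritical3

/-- a maximal `3`-`γc`-vertex critical graph on `n` vertices with
`α + ω = n - 1` has a maximum independent set and a maximum clique that are disjoint. -/
theorem stmt_6 (G : SimpleGraph V) [Fintype V] [DecidableEq V]
    (h : MaximalVertexCritical3 G)
    (hsum : alpha G + omegaNum G = Fintype.card V - 1) :
    ∃ (I W : Finset V),
      (↑I : Set V).Pairwise (fun u v => ¬ G.Adj u v) ∧ I.card = alpha G ∧
      (↑W : Set V).Pairwise G.Adj ∧ W.card = omegaNum G ∧
      I ∩ W = ∅ := by
  obtain ⟨I, hI, hIcard⟩ := exists_isIndepSet_card_eq_alpha G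
  obtain ⟨W, hW, hWcard⟩ := exists_isClique_card_eq_omegaNum G
  by_cases hIW : I ∩ W = ∅
  · exact ⟨I, W, hI, hIcard, hW, hWcard, hIW⟩
  obtain ⟨v, hv⟩ := Finset.nonempty_iff_ne_empty.2 hIW
  replace hIW := inter_eq_singleton_of_isIndepSet_of_isClique hI hW hv
  obtain ⟨x, y, hxy, hxI, hxW, hyI, hyW, hcover⟩ :=
    exists_two_notMem_union hIW (hIcard ▸ hWcard ▸ hsum)
  rcases exists_disjoint_swap_or hI hW hIW hxI hxW with ⟨I', W', hswap⟩ | ⟨hxa, hxw⟩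
  · exact ⟨I', W', hIcard ▸ hWcard ▸ hswap⟩
  rcases exists_disjoint_swap_or hI hW hIW hyI hyW with ⟨I', W', hswap⟩ | ⟨hya, hyw⟩
  · exact ⟨I', W', hIcard ▸ hWcard ▸ hswap⟩
  rw [Finset.mem_inter] at hv
  exact (h.not_obstruction ⟨hI, hW, hv.1, hv.2, hcover, hxI, hxW, hyI, hyW, hxy, hxa, hya,
    hxw, hyw⟩).elim
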